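/- In a finite digraph, the successor sets of the coresets, together with the set of source vertices, partition V(D): the sets α(U) over all coresets U are pairwise disjoint, disjoint from the set of sources, and every non-source vertex lies in α(U) for some coreset U. -/
import Mathlib


variable {V : Type*}

/-- Successor set: vertices with a predecessor in `S`. -/
def succSet (E : V → V → Prop) (S : Set V) : Set V := {v | ∃ u ∈ S, E u v}

/-- Predecessor set: vertices with a successor in `S`. -/
def predSet (E : V → V → Prop) (S : Set V) : Set V := {u | ∃ v ∈ S, E u v}

/-- A nontrivial coreset: a minimal nonempty set `U` with `β(α(U)) = U`. -/
def IsCoreset (E : V → V → Prop) (U : Set V) : Prop :=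
  U.Nonempty ∧ predSet E (succSet E U) = U ∧
    ∀ U' ⊆ U, U'.Nonempty → predSet E (succSet E U') = U' → U' = U

/-- The set of all sinks (the trivial coreset). -/
def sinks (E : V → V → Prop) : Set V := {v | ∀ w, ¬ E v w}

/-- The set of all sources. -/
def sources (E : V → V → Prop) : Set V := {v | ∀ u, ¬ E u v}

/-- A coreset: the trivial coreset (all sinks) or a nontrivial coreset. -/
def IsCoresetGen (E : V → V → Prop) (U : Set V) : Prop :=
  U = sinks E ∨ IsCoreset E U

section Aux

variable (E : V → V → Prop)

lemma succSet_mono {S T : Set V} (h : S ⊆ T) : succSet E S ⊆ succSet E T :=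
  fun v ⟨u, hu, he⟩ => ⟨u, h hu, he⟩

lemma predSet_mono {S T : Set V} (h : S ⊆ T) : predSet E S ⊆ predSet E T :=
  fun u ⟨v, hv, he⟩ => ⟨v, h hv, he⟩

/-- The operator `β ∘ α`. -/
def Fop (S : Set V) : Set V := predSet E (succSet E S)

lemma Fop_mono {S T : Set V} (h : S ⊆ T) : Fop E S ⊆ Fop E T :=
  predSet_mono E (succSet_mono E h)

/-- Every vertex in `S` has a successor. -/
def Live (S : Set V) : Prop := ∀ s ∈ S, ∃ w, E s w

lemma live_predSet (A : Set V) : Live E (predSet E A) := by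
  rintro s ⟨v, _, h⟩; exact ⟨v, h⟩

lemma subset_Fop_of_live {S : Set V} (h : Live E S) : S ⊆ Fop E S := by
  intro s hs
  obtain ⟨w, hw⟩ := h s hs
  exact ⟨w, ⟨s, hs, hw⟩, hw⟩

/-- The complement of a fixed point of `βα` is closed under `βα`. -/
lemma compl_closed {Q : Set V} (hQ : predSet E (succSet E Q) = Q) :
    Fop E Qᶜ ⊆ Qᶜ := by
  rintro x ⟨w, ⟨y, hy, hyw⟩, hxw⟩ hxQ
  exact hy (by rw [← hQ]; exact ⟨w, ⟨x, hxQ, hxw⟩, hyw⟩)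

/-- The generating monotone map whose lfp is the least fixed point of `βα` above `S`. -/
def genHom (S : Set V) : Set V →o Set V :=
  ⟨fun T => S ∪ Fop E T, fun _ _ h => Set.union_subset_union_right _ (Fop_mono E h)⟩

/-- The least fixed point of `βα` containing `S` (for live `S`). -/
def coreOf (S : Set V) : Set V := OrderHom.lfp (genHom E S)

lemma coreOf_eq (S : Set V) : S ∪ Fop E (coreOf E S) = coreOf E S :=
  OrderHom.map_lfp (genHom E S)

lemma subset_coreOf (S : Set V) : S ⊆ coreOf E S := by
  conv_rhs => rw [← coreOf_eq]
  exact Set.subset_union_left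

lemma coreOf_fixed {S : Set V} (h : Live E S) :
    predSet E (succSet E (coreOf E S)) = coreOf E S := by
  have h1 : Fop E (coreOf E S) ⊆ coreOf E S := by
    conv_rhs => rw [← coreOf_eq]
    exact Set.subset_union_right
  refine subset_antisymm h1 ?_
  conv_lhs => rw [← coreOf_eq]
  exact Set.union_subset
    ((subset_Fop_of_live E h).trans (Fop_mono E (subset_coreOf E S))) subset_rfl

lemma coreOf_le {S T : Set V} (hST : S ⊆ T) (hT : predSet E (succSet E T) = T) :
    coreOf E S ⊆ T := by
  apply OrderHom.lfp_le
  show S ∪ Fop E T ⊆ T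
  exact Set.union_subset hST (le_of_eq hT)

/-- The least fixed point generated by a non-sink vertex is a coreset. -/
lemma isCoreset_coreOf {u w : V} (huw : E u w) :
    IsCoreset E (coreOf E {u}) ∧ u ∈ coreOf E {u} := by
  have hlive : Live E ({u} : Set V) := by rintro s rfl; exact ⟨w, huw⟩
  have huP : u ∈ coreOf E {u} := subset_coreOf E {u} rfl
  refine ⟨⟨⟨u, huP⟩, coreOf_fixed E hlive, ?_⟩, huP⟩
  intro Q hQP hQne hQfix
  by_cases huQ : u ∈ Q
  · exact subset_antisymm hQP (coreOf_le E (Set.singleton_subset_iff.2 huQ) hQfix)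
  · exfalso
    have hPc : coreOf E {u} ⊆ Qᶜ := by
      apply OrderHom.lfp_le
      exact Set.union_subset (Set.singleton_subset_iff.2 huQ) (compl_closed E hQfix)
    obtain ⟨q, hq⟩ := hQne
    exact hPc (hQP hq) hq

lemma succSet_sinks : succSet E (sinks E) = ∅ := by
  ext v
  simp only [succSet, sinks, Set.mem_setOf_eq, Set.mem_empty_iff_false, iff_false]
  rintro ⟨x, hx, hxv⟩
  exact hx v hxv

lemma live_of_coreset {U : Set V} (hU : IsCoreset E U) : Live E U := by
  rw [← hU.2.1]
  exact live_predSet E _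

end Aux

/-- The successor sets of the coresets, together with the set of sources,
partition the vertex set. -/
theorem stmt5 {V : Type*} [Finite V] (E : V → V → Prop) :
    (∀ U W : Set V, IsCoresetGen E U → IsCoresetGen E W → U ≠ W →
      succSet E U ∩ succSet E W = ∅) ∧
    (∀ U : Set V, IsCoresetGen E U → succSet E U ∩ sources E = ∅) ∧
    (∀ v : V, v ∉ sources E → ∃ U, IsCoresetGen E U ∧ v ∈ succSet E U) := by
  refine ⟨?_, ?_, ?_⟩
  · -- pairwise disjointness
    intro U W hU hW hne
    rcases hU with rfl | hU
    · rw [succSet_sinks]; exact Set.empty_inter _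
    rcases hW with rfl | hW
    · rw [succSet_sinks]; exact Set.inter_empty _
    -- both nontrivial coresets
    by_contra hcon
    obtain ⟨v, ⟨u, huU, huv⟩, hvW⟩ := Set.nonempty_iff_ne_empty.2 hcon
    have huW : u ∈ W := by rw [← hW.2.1]; exact ⟨v, hvW, huv⟩
    have hliveU : Live E U := live_of_coreset E hU
    have hfixI : predSet E (succSet E (U ∩ W)) = U ∩ W := by
      refine subset_antisymm (Set.subset_inter ?_ ?_)
        (subset_Fop_of_live E (fun s hs => hliveU s hs.1))
      · exact (Fop_mono E Set.inter_subset_left).trans hU.2.1.subset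
      · exact (Fop_mono E Set.inter_subset_right).trans hW.2.1.subset
    have hne' : (U ∩ W).Nonempty := ⟨u, huU, huW⟩
    have h1 := hU.2.2 (U ∩ W) Set.inter_subset_left hne' hfixI
    have h2 := hW.2.2 (U ∩ W) Set.inter_subset_right hne' hfixI
    exact hne (h1 ▸ h2)
  · -- disjoint from sources
    intro U hU
    rcases hU with rfl | hU
    · rw [succSet_sinks]; exact Set.empty_inter _
    ext v
    simp only [Set.mem_inter_iff, Set.mem_empty_iff_false, iff_false]
    rintro ⟨⟨u, _, huv⟩, hsrc⟩
    exact hsrc u huv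
  · -- covering
    intro v hv
    have : ∃ u, E u v := by
      by_contra h
      push_neg at h
      exact hv h
    obtain ⟨u, huv⟩ := this
    obtain ⟨hcs, huP⟩ := isCoreset_coreOf E huv
    exact ⟨coreOf E {u}, Or.inr hcs, u, huP, huv⟩
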